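/- arXiv:math/0608793 — 9 statements merged into one kernel-verified Lean document; each statement's English description precedes it below -/
import Mathlib

section
/- For every natural number m, the integer square root of the number obtained by deleting the last two decimal digits of m equals the integer square root of m with its last decimal digit deleted; that is, Nat.sqrt (m / 100) = (Nat.sqrt m) / 10. -/
theorem aryabhata_sqrt_pair_invariant (m : ℕ) :
    Nat.sqrt (m / 100) = Nat.sqrt m / 10 := by
  set s := Nat.sqrt m with hs
  apply le_antisymm
  · -- sqrt (m/100) ≤ s/10
    have h1 : m < (s + 1) * (s + 1) := Nat.lt_succ_sqrt m
    have h2 : s + 1 ≤ (s / 10 + 1) * 10 := by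
      have := Nat.mod_lt s (show 0 < 10 by norm_num); have := Nat.div_add_mod s 10
      omega
    have h3 : m < ((s / 10 + 1) * (s / 10 + 1)) * 100 := by
      calc m < (s + 1) * (s + 1) := h1
        _ ≤ ((s / 10 + 1) * 10) * ((s / 10 + 1) * 10) := Nat.mul_le_mul h2 h2
        _ = ((s / 10 + 1) * (s / 10 + 1)) * 100 := by ring
    have h4 : m / 100 < (s / 10 + 1) * (s / 10 + 1) :=
      (Nat.div_lt_iff_lt_mul (by norm_num)).mpr h3
    exact Nat.lt_succ_iff.mp (Nat.sqrt_lt.mpr h4)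
  · rw [Nat.le_sqrt]
    calc s / 10 * (s / 10) ≤ s * s / 100 := by
          rw [Nat.le_div_iff_mul_le (by norm_num)]
          have h : s / 10 * 10 ≤ s := Nat.div_mul_le_self s 10
          calc s / 10 * (s / 10) * 100 = (s / 10 * 10) * (s / 10 * 10) := by ring
            _ ≤ s * s := Nat.mul_le_mul h h
      _ ≤ m / 100 := Nat.div_le_div_right (Nat.sqrt_le m)
end

section
/- For every natural number m and every natural number k, Nat.sqrt (m / 100^k) = (Nat.sqrt m) / 10^k. -/
lemma sqrt_div_sq (m b : ℕ) (hb : 0 < b) : Nat.sqrt (m / (b * b)) = Nat.sqrt m / b := by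
  set s := Nat.sqrt m / b with hs
  have hbb : 0 < b * b := Nat.mul_pos hb hb
  apply le_antisymm
  · have h1 : m / (b * b) < (s + 1) * (s + 1) := by
      rw [Nat.div_lt_iff_lt_mul hbb]
      have h2 : Nat.sqrt m < (s + 1) * b := (Nat.div_lt_iff_lt_mul hb).mp (Nat.lt_succ_self s)
      calc m < (Nat.sqrt m + 1) * (Nat.sqrt m + 1) := Nat.lt_succ_sqrt m
        _ ≤ ((s + 1) * b) * ((s + 1) * b) := Nat.mul_le_mul h2 h2
        _ = (s + 1) * (s + 1) * (b * b) := by ring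
    exact Nat.lt_succ_iff.mp (Nat.sqrt_lt.mpr h1)
  · rw [Nat.le_sqrt, Nat.le_div_iff_mul_le hbb]
    have h2 : s * b ≤ Nat.sqrt m := Nat.div_mul_le_self _ _
    calc s * s * (b * b) = (s * b) * (s * b) := by ring
      _ ≤ Nat.sqrt m * Nat.sqrt m := Nat.mul_le_mul h2 h2
      _ ≤ m := Nat.sqrt_le m

theorem aryabhata_sqrt_pair_invariant_iter (m k : ℕ) :
    Nat.sqrt (m / 100 ^ k) = Nat.sqrt m / 10 ^ k := by
  induction k generalizing m with
  | zero => simp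
  | succ n ih =>
    have : m / 100 ^ (n + 1) = (m / 100) / 100 ^ n := by
      rw [Nat.div_div_eq_div_mul, pow_succ, mul_comm]
    rw [this, ih, show (100 : ℕ) = 10 * 10 from rfl, sqrt_div_sq m 10 (by norm_num),
      Nat.div_div_eq_div_mul, pow_succ, mul_comm]
end

section
/- Let m, R, S be natural numbers such that R^3 ≤ m < (R+1)^3 and S^3 ≤ m / 1000 < (S+1)^3. Then S = R / 10; that is, the integer cube root of the number obtained by deleting the last three decimal digits of m equals the integer cube root of m with its last decimal digit deleted. -/
theorem aryabhata_cbrt_triple_invariant (m R S : ℕ)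
    (hR₁ : R ^ 3 ≤ m) (hR₂ : m < (R + 1) ^ 3)
    (hS₁ : S ^ 3 ≤ m / 1000) (hS₂ : m / 1000 < (S + 1) ^ 3) :
    S = R / 10 := by
  have h1 : (R / 10) ^ 3 ≤ m / 1000 := by
    rw [Nat.le_div_iff_mul_le (by norm_num)]
    calc (R / 10) ^ 3 * 1000 = (10 * (R / 10)) ^ 3 := by ring
      _ ≤ R ^ 3 := Nat.pow_le_pow_left (by omega) 3
      _ ≤ m := hR₁
  have h2 : m / 1000 < (R / 10 + 1) ^ 3 := by
    rw [Nat.div_lt_iff_lt_mul (by norm_num)]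
    calc m < (R + 1) ^ 3 := hR₂
      _ ≤ (10 * (R / 10 + 1)) ^ 3 := Nat.pow_le_pow_left (by omega) 3
      _ = (R / 10 + 1) ^ 3 * 1000 := by ring
  rcases lt_trichotomy S (R / 10) with h | h | h
  · have : (S + 1) ^ 3 ≤ (R / 10) ^ 3 := Nat.pow_le_pow_left (by omega) 3
    omega
  · exact h
  · have : (R / 10 + 1) ^ 3 ≤ S ^ 3 := Nat.pow_le_pow_left (by omega) 3
    omega
end

section
/- Let m, k, R, S be natural numbers such that R^3 ≤ m < (R+1)^3 and S^3 ≤ m / 1000^k < (S+1)^3. Then S = R / 10^k. -/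
/-!
Truncating `R` to `R / d` commutes with taking the integer cube root: multiplying
`(R / d) ^ 3 ≤ m / d ^ 3 < (R / d + 1) ^ 3` through by `d ^ 3` reduces it to
`(R / d * d) ^ 3 ≤ R ^ 3` and `(R + 1) ^ 3 ≤ ((R / d + 1) * d) ^ 3`, i.e. to
`R / d * d ≤ R < (R / d + 1) * d`. With `d = 10 ^ k` we have `d ^ 3 = 1000 ^ k`, and the
integer cube root is unique.
-/

namespace Nat

def IsFloorRoot (n m r : ℕ) : Prop := r ^ n ≤ m ∧ m < (r + 1) ^ n

namespace IsFloorRoot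

variable {n m r s : ℕ}

theorem unique (hn : n ≠ 0) (hr : IsFloorRoot n m r) (hs : IsFloorRoot n m s) : r = s := by
  have hrs : r < s + 1 := (Nat.pow_lt_pow_iff_left hn).1 (hr.1.trans_lt hs.2)
  have hsr : s < r + 1 := (Nat.pow_lt_pow_iff_left hn).1 (hs.1.trans_lt hr.2)
  omega

theorem div_pow {d : ℕ} (hd : 0 < d) (h : IsFloorRoot n m r) :
    IsFloorRoot n (m / d ^ n) (r / d) := by
  have hdn : 0 < d ^ n := Nat.pow_pos hd
  constructor
  · rw [Nat.le_div_iff_mul_le hdn, ← Nat.mul_pow]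
    exact (Nat.pow_le_pow_left (Nat.div_mul_le_self r d) n).trans h.1
  · rw [Nat.div_lt_iff_lt_mul hdn, ← Nat.mul_pow]
    have hr : r + 1 ≤ (r / d + 1) * d := by
      have := Nat.lt_div_mul_add (a := r) hd
      rw [Nat.add_mul, Nat.one_mul]
      omega
    exact h.2.trans_le (Nat.pow_le_pow_left hr n)

end IsFloorRoot

end Nat

theorem aryabhata_cbrt_triple_invariant_iter (m k R S : ℕ)
    (hR₁ : R ^ 3 ≤ m) (hR₂ : m < (R + 1) ^ 3)
    (hS₁ : S ^ 3 ≤ m / 1000 ^ k) (hS₂ : m / 1000 ^ k < (S + 1) ^ 3) :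
    S = R / 10 ^ k := by
  have h1000 : 1000 ^ k = (10 ^ k) ^ 3 := by rw [← Nat.pow_mul, Nat.mul_comm, Nat.pow_mul]
  have hR : Nat.IsFloorRoot 3 m R := ⟨hR₁, hR₂⟩
  have hS : Nat.IsFloorRoot 3 (m / (10 ^ k) ^ 3) S := h1000 ▸ ⟨hS₁, hS₂⟩
  exact hS.unique (by norm_num) (hR.div_pow (Nat.pow_pos (by norm_num)))
end

section
/- Let m, R, d be natural numbers with R^3 ≤ m < (R+1)^3 and d < 1000. Then there exists a unique natural number B with B ≤ 9 such that (10*R + B)^3 ≤ 1000*m + d < (10*R + B + 1)^3. That is, appending one new triple of decimal digits to m extends the integer cube root by exactly one new decimal digit. -/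
/-! Scaling the bracket R ^ 3 ≤ m < (R + 1) ^ 3 by 10 ^ 3 gives
(10 * R) ^ 3 ≤ 1000 * m + d < (10 * R + 10) ^ 3, so 1000 * m + d lies in exactly one gap
between consecutive terms of the strictly increasing sequence (10 * R + B) ^ 3, 0 ≤ B ≤ 10. -/

theorem exists_le_lt_succ_of_le_of_lt {α : Type*} [LinearOrder α] {f : ℕ → α} {N : α} {n : ℕ}
    (h₀ : f 0 ≤ N) (hn : N < f (n + 1)) : ∃ B ≤ n, f B ≤ N ∧ N < f (B + 1) := by
  classical
  have hex : ∃ B, N < f (B + 1) := ⟨n, hn⟩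
  refine ⟨Nat.find hex, Nat.find_min' hex hn, ?_, Nat.find_spec hex⟩
  rcases hB : Nat.find hex with _ | B
  · exact h₀
  · exact not_lt.1 (Nat.find_min hex (hB ▸ B.lt_succ_self))

theorem StrictMono.eq_of_le_of_lt_succ {α : Type*} [Preorder α] {f : ℕ → α} (hf : StrictMono f)
    {N : α} {a b : ℕ} (ha : f a ≤ N ∧ N < f (a + 1)) (hb : f b ≤ N ∧ N < f (b + 1)) : a = b := by
  have hab : a < b + 1 := hf.lt_iff_lt.1 (ha.1.trans_lt hb.2)
  have hba : b < a + 1 := hf.lt_iff_lt.1 (hb.1.trans_lt ha.2)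
  omega

theorem pow_mul_le_pow_mul_add_lt {k b R m d : ℕ} (hR₁ : R ^ k ≤ m) (hR₂ : m < (R + 1) ^ k)
    (hd : d < b ^ k) : (b * R) ^ k ≤ b ^ k * m + d ∧ b ^ k * m + d < (b * R + b) ^ k := by
  rw [mul_pow, ← mul_add_one, mul_pow]
  constructor
  · exact (Nat.mul_le_mul_left _ hR₁).trans (Nat.le_add_right _ _)
  · calc b ^ k * m + d < b ^ k * m + b ^ k := by omega
      _ = b ^ k * (m + 1) := by ring
      _ ≤ b ^ k * (R + 1) ^ k := Nat.mul_le_mul_left _ hR₂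

theorem aryabhata_cbrt_step (m R d : ℕ)
    (hR₁ : R ^ 3 ≤ m) (hR₂ : m < (R + 1) ^ 3) (hd : d < 1000) :
    ∃! B : ℕ, B ≤ 9 ∧ (10 * R + B) ^ 3 ≤ 1000 * m + d ∧
      1000 * m + d < (10 * R + B + 1) ^ 3 := by
  have hf : StrictMono fun B ↦ (10 * R + B) ^ 3 := fun _ _ hab ↦
    Nat.pow_lt_pow_left (by omega) three_ne_zero
  obtain ⟨h₀, h₁₀⟩ := pow_mul_le_pow_mul_add_lt (b := 10) hR₁ hR₂ hd
  obtain ⟨B, hB, hBN⟩ := exists_le_lt_succ_of_le_of_lt (f := fun B ↦ (10 * R + B) ^ 3) (n := 9)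
    (by simpa using h₀) h₁₀
  exact ⟨B, ⟨hB, hBN⟩, fun C hC ↦ hf.eq_of_le_of_lt_succ hC.2 hBN⟩
end

section
/- Let m, d₁, d₀ be natural numbers with d₁ < 10 and d₀ < 10, let R = Nat.sqrt m, and assume R ≥ 1. Let B = Nat.sqrt (100*m + 10*d₁ + d₀) - 10*R (the next decimal digit of the square root). Then B ≤ (10*(m - R^2) + d₁) / (2*R), where division and subtraction are truncated natural-number operations. That is, Aryabhata's quotient estimate — dividing the number formed by the current remainder and the next (even-place) digit by twice the current root — is an upper bound for the true next digit of the square root. -/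
theorem aryabhata_sqrt_quotient_estimate (m d₁ d₀ R B : ℕ)
    (hd₁ : d₁ < 10) (hd₀ : d₀ < 10)
    (hR : R = Nat.sqrt m) (hR1 : 1 ≤ R)
    (hB : B = Nat.sqrt (100 * m + 10 * d₁ + d₀) - 10 * R) :
    B ≤ (10 * (m - R ^ 2) + d₁) / (2 * R) := by
  set N := 100 * m + 10 * d₁ + d₀ with hN
  have hm : R ^ 2 ≤ m := by
    rw [hR, pow_two]; exact Nat.sqrt_le m
  have hs10 : 10 * R ≤ Nat.sqrt N := by
    apply Nat.le_sqrt.mpr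
    show 10 * R * (10 * R) ≤ 100 * m + 10 * d₁ + d₀
    nlinarith
  have hsN : Nat.sqrt N * Nat.sqrt N ≤ N := Nat.sqrt_le N
  have hsB : Nat.sqrt N = 10 * R + B := by omega
  rw [hsB] at hsN
  set S := m - R ^ 2 with hS
  have hmS : m = R ^ 2 + S := by omega
  rw [Nat.le_div_iff_mul_le (by omega : 0 < 2 * R)]
  rw [hN, hmS] at hsN
  have key : 10 * (B * (2 * R)) ≤ 10 * (10 * S + d₁) + 9 := by nlinarith
  omega
end

section
/- Let m, R, d₂, d₁, d₀, B be natural numbers with R^3 ≤ m < (R+1)^3, R ≥ 1, d₂ < 10, d₁ < 10, d₀ < 10, and (10*R + B)^3 ≤ 1000*m + 100*d₂ + 10*d₁ + d₀ < (10*R + B + 1)^3 (so B is the next decimal digit of the cube root). Then B ≤ (10*(m - R^3) + d₂) / (3*R^2), where division and subtraction are truncated natural-number operations. That is, Aryabhata's quotient estimate — dividing the number formed by the current remainder and the next (second non-cube place) digit by thrice the square of the current root — is an upper bound for the true next digit of the cube root. -/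
theorem aryabhata_cbrt_quotient_estimate (m R d₂ d₁ d₀ B : ℕ)
    (hR₁ : R ^ 3 ≤ m) (hR₂ : m < (R + 1) ^ 3) (hR1 : 1 ≤ R)
    (hd₂ : d₂ < 10) (hd₁ : d₁ < 10) (hd₀ : d₀ < 10)
    (hB₁ : (10 * R + B) ^ 3 ≤ 1000 * m + 100 * d₂ + 10 * d₁ + d₀)
    (hB₂ : 1000 * m + 100 * d₂ + 10 * d₁ + d₀ < (10 * R + B + 1) ^ 3) :
    B ≤ (10 * (m - R ^ 3) + d₂) / (3 * R ^ 2) := by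
  obtain ⟨S, rfl⟩ : ∃ S, m = R ^ 3 + S := ⟨m - R ^ 3, by omega⟩
  have hsub : R ^ 3 + S - R ^ 3 = S := by omega
  rw [hsub]
  have key : 300 * (R ^ 2 * B) ≤ 1000 * S + 100 * d₂ + 99 := by
    have expand : (10 * R + B) ^ 3
        = 1000 * R ^ 3 + 300 * (R ^ 2 * B) + 30 * (R * B ^ 2) + B ^ 3 := by ring
    rw [expand] at hB₁
    omega
  rw [Nat.le_div_iff_mul_le (by positivity)]
  have : 3 * (R ^ 2 * B) ≤ 10 * S + d₂ := by omega
  nlinarith [this]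
end

section
/- For every natural number x with x ≥ 1, the number of decimal digits of Nat.sqrt x equals (N + 1) / 2, where N is the number of decimal digits of x and division is truncated natural-number division; formally, (Nat.digits 10 (Nat.sqrt x)).length = ((Nat.digits 10 x).length + 1) / 2. -/
theorem aryabhata_sqrt_digit_count (x : ℕ) (hx : 1 ≤ x) :
    (Nat.digits 10 (Nat.sqrt x)).length = ((Nat.digits 10 x).length + 1) / 2 := by
  have hb : (1:ℕ) < 10 := by norm_num
  have hs : Nat.sqrt x ≠ 0 := by
    have := Nat.sqrt_pos.mpr hx
    omega
  have hx0 : x ≠ 0 := by omega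
  rw [Nat.digits_len 10 _ hb hs, Nat.digits_len 10 _ hb hx0]
  set d := Nat.log 10 (Nat.sqrt x) with hd
  set N := Nat.log 10 x with hN
  -- 10^d ≤ sqrt x < 10^(d+1)
  have h1 : 10 ^ d ≤ Nat.sqrt x := Nat.pow_log_le_self 10 hs
  have h2 : Nat.sqrt x < 10 ^ (d + 1) := Nat.lt_pow_succ_log_self hb _
  have h3 : 10 ^ N ≤ x := Nat.pow_log_le_self 10 hx0
  have h4 : x < 10 ^ (N + 1) := Nat.lt_pow_succ_log_self hb _
  -- x ≥ (10^d)^2 = 10^(2d)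
  have hlow : 10 ^ (2 * d) ≤ x := by
    calc 10 ^ (2 * d) = 10 ^ d * 10 ^ d := by rw [two_mul, pow_add]
    _ ≤ Nat.sqrt x * Nat.sqrt x := Nat.mul_le_mul h1 h1
    _ ≤ x := Nat.sqrt_le x
  -- x < (10^(d+1))^2 = 10^(2d+2)
  have hhigh : x < 10 ^ (2 * d + 2) := by
    calc x < (Nat.sqrt x + 1) * (Nat.sqrt x + 1) := Nat.lt_succ_sqrt x
    _ ≤ 10 ^ (d + 1) * 10 ^ (d + 1) := Nat.mul_le_mul h2 h2
    _ = 10 ^ (2 * d + 2) := by ring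
  have e1 : 2 * d < N + 1 := by
    have := lt_of_le_of_lt hlow h4
    exact (Nat.pow_lt_pow_iff_right hb).mp this
  have e2 : N < 2 * d + 2 := by
    have := lt_of_le_of_lt h3 hhigh
    exact (Nat.pow_lt_pow_iff_right hb).mp this
  omega
end

section
/- Let x and R be natural numbers with x ≥ 1 and R^3 ≤ x < (R+1)^3. Then the number of decimal digits of R equals (N + 2) / 3, where N is the number of decimal digits of x and division is truncated natural-number division; formally, (Nat.digits 10 R).length = ((Nat.digits 10 x).length + 2) / 3. -/
theorem aryabhata_cbrt_digit_count (x R : ℕ) (hx : 1 ≤ x)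
    (hR₁ : R ^ 3 ≤ x) (hR₂ : x < (R + 1) ^ 3) :
    (Nat.digits 10 R).length = ((Nat.digits 10 x).length + 2) / 3 := by
  have hR0 : 1 ≤ R := by
    by_contra h
    interval_cases R <;> simp_all <;> omega
  set d := Nat.log 10 R with hd
  have h1 : 10 ^ d ≤ R := Nat.pow_log_le_self 10 (by omega)
  have h2 : R < 10 ^ (d + 1) := Nat.lt_pow_succ_log_self (by norm_num) R
  have hlo : 10 ^ (3 * d) ≤ x := by
    calc 10 ^ (3 * d) = (10 ^ d) ^ 3 := by ring
    _ ≤ R ^ 3 := Nat.pow_le_pow_left h1 3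
    _ ≤ x := hR₁
  have hhi : x < 10 ^ (3 * d + 3) := by
    calc x < (R + 1) ^ 3 := hR₂
    _ ≤ (10 ^ (d + 1)) ^ 3 := Nat.pow_le_pow_left (by omega) 3
    _ = 10 ^ (3 * d + 3) := by ring
  have hlx1 : 3 * d ≤ Nat.log 10 x := Nat.le_log_of_pow_le (by norm_num) hlo
  have hlx2 : Nat.log 10 x < 3 * d + 3 := Nat.log_lt_of_lt_pow (by omega) hhi
  rw [Nat.digits_len 10 R (by norm_num) (by omega),
      Nat.digits_len 10 x (by norm_num) (by omega)]
  omega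
end
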